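/- Let n ≥ 2, let Ω ⊆ ℝⁿ be open, and let Φ : Ω → 𝔹ⁿ be a map such that Φ(P_k ∩ Ω) ∩ Γ_k = ∅ for every k. Let L ⊆ Ω be a subset with L ⊆ P_{k₀} for some k₀ ∈ ℕ. Then Φ(L) ∩ Γ_k = ∅ for all k ≥ k₀, and consequently every divergent smooth path γ : [0,∞) → 𝔹ⁿ whose image is contained in Φ(L) has infinite length (total variation ∞). -/

import Mathlib

open Set Metric Filter

/-- The slab `P_k = ℝ^{n-1} × [−k, k]` (last coordinate in `[−k,k]`). -/
def Pslab (n : ℕ) (hn : 2 ≤ n) (k : ℕ) : Set (EuclideanSpace ℝ (Fin n)) :=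
  {x | x (⟨n - 1, by omega⟩ : Fin n) ∈ Set.Icc (-(k : ℝ)) (k : ℝ)}

/-- The "labyrinth" barrier `Γ_k`: the sphere of radius `s k` centered at the origin,
minus the open `ε`-ball around the point `p_k = (0,…,0,(−1)^k s_k)`. -/
noncomputable def Gamma (n : ℕ) (hn : 2 ≤ n) (s : ℕ → ℝ) (ε : ℝ) (k : ℕ) :
    Set (EuclideanSpace ℝ (Fin n)) :=
  Metric.sphere (0 : EuclideanSpace ℝ (Fin n)) (s k) \
    Metric.ball (EuclideanSpace.single (⟨n - 1, by omega⟩ : Fin n) ((-1 : ℝ) ^ k * s k)) ε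

/-- A path `γ` (with time domain `[0,∞)`) is divergent in `M` if it eventually leaves
every compact subset of `M`. -/
def DivergentIn {E : Type*} [TopologicalSpace E] (γ : ℝ → E) (M : Set E) : Prop :=
  ∀ K : Set E, IsCompact K → K ⊆ M → ∀ᶠ t in atTop, γ t ∉ K

/-- Lemma 2.4, leafwise: if `Φ(P_k ∩ Ω) ∩ Γ_k = ∅` for every `k` and
`L ⊆ Ω` satisfies `L ⊆ P_{k₀}`, then `Φ(L) ∩ Γ_k = ∅` for all `k ≥ k₀`, and every
divergent smooth path in `𝔹ⁿ` with image in `Φ(L)` has infinite length. -/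
theorem image_of_slab_bounded_set_gives_complete_paths
    (n : ℕ) (hn : 2 ≤ n) (r s : ℕ → ℝ) (ε : ℝ)
    (hs0 : 0 < s 0) (hsr : ∀ k, s k < r k) (hrs : ∀ k, r k < s (k + 1))
    (hr1 : Tendsto r atTop (nhds 1)) (hs1 : Tendsto s atTop (nhds 1))
    (hε0 : 0 < ε) (hεs : ε < s 0)
    (Ω : Set (EuclideanSpace ℝ (Fin n))) (hΩopen : IsOpen Ω)
    (Φ : EuclideanSpace ℝ (Fin n) → EuclideanSpace ℝ (Fin n))
    (hΦmaps : Set.MapsTo Φ Ω (ball (0 : EuclideanSpace ℝ (Fin n)) 1))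
    (hΦP : ∀ k, Φ '' (Pslab n hn k ∩ Ω) ∩ Gamma n hn s ε k = ∅)
    (L : Set (EuclideanSpace ℝ (Fin n))) (hLΩ : L ⊆ Ω)
    (k₀ : ℕ) (hLP : L ⊆ Pslab n hn k₀) :
    (∀ k, k₀ ≤ k → Φ '' L ∩ Gamma n hn s ε k = ∅) ∧
      ∀ γ : ℝ → EuclideanSpace ℝ (Fin n),
        ContDiffOn ℝ (⊤ : ℕ∞) γ (Ici (0 : ℝ)) →
        DivergentIn γ (ball (0 : EuclideanSpace ℝ (Fin n)) 1) →
        (∀ t ∈ Ici (0 : ℝ), γ t ∈ Φ '' L) →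
        eVariationOn γ (Ici 0) = ⊤ := by
  -- basic facts about s
  have hsmono : Monotone s := monotone_nat_of_le_succ fun k => ((hsr k).trans (hrs k)).le
  have hsucc : ∀ k, s k < s (k + 1) := fun k => (hsr k).trans (hrs k)
  have hsle1 : ∀ k, s k ≤ 1 := fun k => hsmono.ge_of_tendsto hs1 k
  have hslt1 : ∀ k, s k < 1 := fun k => lt_of_lt_of_le (hsucc k) (hsle1 (k + 1))
  have hspos : ∀ k, 0 < s k := fun k => lt_of_lt_of_le hs0 (hsmono (Nat.zero_le k))
  -- Part 1
  have part1 : ∀ k, k₀ ≤ k → Φ '' L ∩ Gamma n hn s ε k = ∅ := by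
    intro k hk
    have hsub : L ⊆ Pslab n hn k := by
      intro x hx
      have hx' := hLP hx
      simp only [Pslab, mem_setOf_eq, mem_Icc] at hx' ⊢
      have : (k₀ : ℝ) ≤ (k : ℝ) := by exact_mod_cast hk
      constructor <;> linarith [hx'.1, hx'.2]
    have : Φ '' L ∩ Gamma n hn s ε k ⊆ Φ '' (Pslab n hn k ∩ Ω) ∩ Gamma n hn s ε k := by
      intro x hx
      refine ⟨?_, hx.2⟩
      obtain ⟨y, hy, rfl⟩ := hx.1
      exact ⟨y, ⟨hsub hy, hLΩ hy⟩, rfl⟩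
    exact eq_empty_of_subset_empty (this.trans (hΦP k).subset)
  refine ⟨part1, ?_⟩
  intro γ hγ hdiv hγim
  have hγc : ContinuousOn γ (Ici (0:ℝ)) := hγ.continuousOn
  have hΦL : Φ '' L ⊆ ball (0 : EuclideanSpace ℝ (Fin n)) 1 := by
    rintro _ ⟨y, hy, rfl⟩; exact hΦmaps (hLΩ hy)
  have hγ0 : ‖γ 0‖ < 1 := by
    have := hΦL (hγim 0 (mem_Ici.mpr le_rfl))
    rwa [mem_ball_zero_iff] at this
  -- step: from a point with norm < s k, find a later time on the sphere of radius s k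
  have step : ∀ (k : ℕ) (a : ℝ), 0 ≤ a → ‖γ a‖ < s k →
      ∃ b, a ≤ b ∧ 0 ≤ b ∧ ‖γ b‖ = s k := by
    intro k a ha hak
    have hK : IsCompact (closedBall (0 : EuclideanSpace ℝ (Fin n)) (s k)) :=
      isCompact_closedBall _ _
    have hKsub : closedBall (0 : EuclideanSpace ℝ (Fin n)) (s k) ⊆ ball 0 1 :=
      closedBall_subset_ball (hslt1 k)
    obtain ⟨B, hB⟩ := eventually_atTop.mp (hdiv _ hK hKsub)
    set c := max a B with hc
    have hac : a ≤ c := le_max_left _ _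
    have hcB : ‖γ c‖ > s k := by
      have := hB c (le_max_right _ _)
      rw [mem_closedBall, dist_zero_right] at this
      exact not_le.mp this
    have hcont : ContinuousOn (fun t => ‖γ t‖) (Icc a c) :=
      (hγc.mono ((Icc_subset_Ici_self).trans (Ici_subset_Ici.mpr ha))).norm
    have := intermediate_value_Icc hac hcont
    have hmem : s k ∈ Icc ‖γ a‖ ‖γ c‖ := ⟨hak.le, hcB.le⟩
    obtain ⟨b, hb, hbeq⟩ := this hmem
    exact ⟨b, hb.1, le_trans ha hb.1, hbeq⟩
  choose! f hf1 hf2 hf3 using step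
  -- k₁ : large enough index
  obtain ⟨k₁, hk₁⟩ := ((hs1.eventually (eventually_gt_nhds hγ0)).and
    (eventually_ge_atTop k₀)).exists
  -- the sequence of crossing times
  set u : ℕ → ℝ := fun m => Nat.rec (f k₁ 0) (fun m x => f (k₁ + m + 1) x) m with hu
  have hu0 : u 0 = f k₁ 0 := rfl
  have husucc : ∀ m, u (m + 1) = f (k₁ + m + 1) (u m) := fun m => rfl
  have key : ∀ m, 0 ≤ u m ∧ ‖γ (u m)‖ = s (k₁ + m) ∧ u m ≤ u (m + 1) := by
    intro m
    induction m with
    | zero =>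
      have h0 : ‖γ 0‖ < s k₁ := hk₁.1
      have h1 := hf2 k₁ 0 le_rfl h0
      have h2 : ‖γ (u 0)‖ = s (k₁ + 0) := by rw [hu0, Nat.add_zero]; exact hf3 k₁ 0 le_rfl h0
      refine ⟨by rw [hu0]; exact h1, h2, ?_⟩
      rw [husucc 0]
      exact hf1 (k₁ + 0 + 1) (u 0) (by rw [hu0]; exact h1)
        (by rw [h2]; exact hsucc (k₁ + 0))
    | succ m ih =>
      obtain ⟨ha, hb, hc⟩ := ih
      have hlt : ‖γ (u m)‖ < s (k₁ + m + 1) := by rw [hb]; exact hsucc (k₁ + m)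
      have ha' : 0 ≤ u (m + 1) := by rw [husucc]; exact hf2 _ _ ha hlt
      have hb' : ‖γ (u (m + 1))‖ = s (k₁ + (m + 1)) := by
        rw [husucc]
        have := hf3 (k₁ + m + 1) (u m) ha hlt
        rwa [show k₁ + m + 1 = k₁ + (m + 1) from by ring] at this
      refine ⟨ha', hb', ?_⟩
      rw [husucc (m + 1)]
      exact hf1 _ _ ha' (by rw [hb']; exact hsucc (k₁ + (m + 1)))
  have humono : Monotone u := monotone_nat_of_le_succ fun m => (key m).2.2
  have humem : ∀ m, u m ∈ Ici (0 : ℝ) := fun m => (key m).1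
  -- each γ (u m) is within ε of the pole p_{k₁+m}
  set i : Fin n := (⟨n - 1, by omega⟩ : Fin n) with hi
  set p : ℕ → EuclideanSpace ℝ (Fin n) :=
    fun k => EuclideanSpace.single i ((-1 : ℝ) ^ k * s k) with hp
  have hnear : ∀ m, dist (γ (u m)) (p (k₁ + m)) < ε := by
    intro m
    have hsph : γ (u m) ∈ Metric.sphere (0 : EuclideanSpace ℝ (Fin n)) (s (k₁ + m)) := by
      rw [mem_sphere_zero_iff_norm]; exact (key m).2.1
    have hmemL : γ (u m) ∈ Φ '' L := hγim (u m) (humem m)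
    have hnot : γ (u m) ∉ Gamma n hn s ε (k₁ + m) := by
      intro h
      have : γ (u m) ∈ Φ '' L ∩ Gamma n hn s ε (k₁ + m) := ⟨hmemL, h⟩
      rw [part1 (k₁ + m) (le_trans hk₁.2 (Nat.le_add_right _ _))] at this
      exact this
    by_contra hd
    exact hnot ⟨hsph, fun hball => hd (by rwa [mem_ball] at hball)⟩
  -- distance between consecutive poles
  have hpoles : ∀ k, dist (p (k + 1)) (p k) = s (k + 1) + s k := by
    intro k
    rw [hp]
    rw [EuclideanSpace.dist_single_same, Real.dist_eq]
    have : (-1 : ℝ) ^ (k + 1) * s (k + 1) - (-1 : ℝ) ^ k * s k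
        = (-1 : ℝ) ^ k * (-(s (k + 1) + s k)) := by ring
    rw [this, abs_mul, abs_pow, abs_neg, abs_one, one_pow, one_mul, abs_neg,
      abs_of_nonneg (by have := hspos (k+1); have := hspos k; linarith)]
  -- lower bound on consecutive distances
  set c : ℝ := 2 * s 0 - 2 * ε with hcdef
  have hcpos : 0 < c := by simp only [hcdef]; linarith
  have hdistlb : ∀ m, c ≤ dist (γ (u (m + 1))) (γ (u m)) := by
    intro m
    have h1 := hnear m
    have h2 := hnear (m + 1)
    have h3 := hpoles (k₁ + m)
    have htri : dist (p (k₁ + m + 1)) (p (k₁ + m)) ≤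
        dist (p (k₁ + m + 1)) (γ (u (m + 1))) + dist (γ (u (m + 1))) (γ (u m))
          + dist (γ (u m)) (p (k₁ + m)) := dist_triangle4 _ _ _ _
    have h2' : dist (p (k₁ + m + 1)) (γ (u (m + 1))) < ε := by
      rw [dist_comm]
      rw [show k₁ + m + 1 = k₁ + (m + 1) from by ring]
      exact h2
    have hs1' : s 0 ≤ s (k₁ + m) := hsmono (Nat.zero_le _)
    have hs2' : s 0 ≤ s (k₁ + m + 1) := hsmono (Nat.zero_le _)
    rw [h3] at htri
    simp only [hcdef]
    linarith
  -- conclude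
  by_contra hV
  have hVlt : eVariationOn γ (Ici (0:ℝ)) < ⊤ := lt_top_iff_ne_top.mpr hV
  obtain ⟨m, hm⟩ := exists_nat_gt ((eVariationOn γ (Ici (0:ℝ))).toReal / c)
  have hsum : ∀ N : ℕ, (N : ENNReal) * ENNReal.ofReal c ≤ eVariationOn γ (Ici (0:ℝ)) := by
    intro N
    have hle := eVariationOn.sum_le (f := γ) (n := N) humono humem
    refine le_trans ?_ hle
    have : ∀ j ∈ Finset.range N, ENNReal.ofReal c ≤ edist (γ (u (j + 1))) (γ (u j)) := by
      intro j _
      rw [edist_dist]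
      exact ENNReal.ofReal_le_ofReal (hdistlb j)
    calc (N : ENNReal) * ENNReal.ofReal c
        = ∑ _j ∈ Finset.range N, ENNReal.ofReal c := by
          rw [Finset.sum_const, Finset.card_range, nsmul_eq_mul]
      _ ≤ ∑ j ∈ Finset.range N, edist (γ (u (j + 1))) (γ (u j)) := Finset.sum_le_sum this
  have hm' := hsum m
  have hof : (m : ENNReal) * ENNReal.ofReal c = ENNReal.ofReal (m * c) := by
    rw [ENNReal.ofReal_mul (by positivity : (0:ℝ) ≤ (m:ℝ)), ENNReal.ofReal_natCast]
  rw [hof] at hm'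
  have : (m : ℝ) * c ≤ (eVariationOn γ (Ici (0:ℝ))).toReal :=
    (ENNReal.ofReal_le_iff_le_toReal hV).mp hm'
  have : (m : ℝ) > (eVariationOn γ (Ici (0:ℝ))).toReal / c := hm
  have := (div_lt_iff₀ hcpos).mp hm
  linarith
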